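/- arXiv:1403.0881 — 2 statements merged into one kernel-verified Lean document; each statement's English description precedes it below -/
import Mathlib

section
/- Let n ≥ k ≥ 2 be integers. In the integral group ring ℤ[Σ_n], with a = Σ_σ sgn(σ)·σ summed over permutations fixing each of k+1, …, n, and b = Σ_τ τ summed over permutations fixing each of 2, …, k, the ℤ-submodule ℤ[Σ_n]·(a·b) spanned by the elements g·a·b for g ∈ Σ_n is a free abelian group of rank binom(n−1, k−1). -/
/-- The antisymmetrizer `a = Σ_σ sgn(σ)·σ ∈ ℤ[Σₙ]` over permutations of `{1,…,n}` fixing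
each of `k+1,…,n` (in zero-based indexing: fixing every index `≥ k`). -/
noncomputable def hookA (n k : ℕ) : MonoidAlgebra ℤ (Equiv.Perm (Fin n)) :=
  ∑ σ ∈ Finset.univ.filter (fun σ : Equiv.Perm (Fin n) => ∀ i : Fin n, k ≤ (i : ℕ) → σ i = i),
    MonoidAlgebra.single σ ((Equiv.Perm.sign σ : ℤ))

/-- The symmetrizer `b = Σ_τ τ ∈ ℤ[Σₙ]` over permutations of `{1,…,n}` fixing each of
`2,…,k` (in zero-based indexing: fixing every index `i` with `1 ≤ i < k`). -/
noncomputable def hookB (n k : ℕ) : MonoidAlgebra ℤ (Equiv.Perm (Fin n)) :=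
  ∑ τ ∈ Finset.univ.filter
      (fun τ : Equiv.Perm (Fin n) => ∀ i : Fin n, 1 ≤ (i : ℕ) → (i : ℕ) < k → τ i = i),
    MonoidAlgebra.single τ (1 : ℤ)

/-!
Take the column `S = {0, …, k-1}` and the corner `p = 0`, so that `a` is the alternating sum over
the permutations supported in `S` and `b` the sum over those fixing `S ∖ {p}`. Since `σ a = ± a`
for `σ` supported in `S`, and a permutation fixing `S` pointwise commutes with `a` and is absorbed
by `b`, the translate `g a b` depends, up to sign, only on the image `g(S)`. If `p ∉ g(S)`, put
`m = g⁻¹ p ∉ S`: the alternating sum over `S ∪ {m}` is killed by `b`, as their groups share the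
odd transposition `(p m)`, and splitting it into cosets of the column group gives the Garnir relation
`a b = ∑_{j ∈ S} (j m) a b`, whose terms all have `p` in the image. So the translates with
`g(p) = p` and `g(S) = {p} ∪ s`, for `s` a `(k-1)`-subset avoiding `p`, span. They are independent:
the coefficient of `g'` in `g a b` vanishes unless `g' (S ∖ {p}) ⊆ g(S)`, and is `1` at `g' = g`
because the two groups meet trivially.
-/

open Finset MonoidAlgebra Equiv Equiv.Perm

lemma single_one_mul_single_one {M : Type*} [Mul M] (g h : M) :
    single g (1 : ℤ) * single h 1 = single (g * h) 1 := by
  rw [single_mul_single, mul_one]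

section CharSum

variable {G : Type*} [Group G] [Fintype G] (H K : Subgroup G) (χ ψ : G →* ℤˣ)

open scoped Classical in
noncomputable def charSum : MonoidAlgebra ℤ G :=
  ∑ x ∈ univ.filter (· ∈ H), single x (χ x : ℤ)

variable {H K χ ψ}

lemma single_mul_charSum {h : G} (hh : h ∈ H) :
    single h 1 * charSum H χ = (χ h : ℤ) • charSum H χ := by
  rw [charSum, mul_sum, smul_sum]
  refine sum_equiv (Equiv.mulLeft h) (fun x => ?_) (fun x _ => ?_)
  · simp [H.mul_mem_cancel_left hh]
  · rw [single_mul_single, one_mul, smul_single, coe_mulLeft, map_mul, Units.val_mul, smul_eq_mul,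
      ← mul_assoc, ← Units.val_mul, Int.units_mul_self, Units.val_one, one_mul]

lemma charSum_mul_single {h : G} (hh : h ∈ H) :
    charSum H χ * single h 1 = (χ h : ℤ) • charSum H χ := by
  rw [charSum, sum_mul, smul_sum]
  refine sum_equiv (Equiv.mulRight h) (fun x => ?_) (fun x _ => ?_)
  · simp [H.mul_mem_cancel_right hh]
  · rw [single_mul_single, mul_one, smul_single, coe_mulRight, map_mul, Units.val_mul, smul_eq_mul,
      mul_left_comm, ← Units.val_mul, Int.units_mul_self, Units.val_one, mul_one]

lemma commute_single_charSum {ρ : G} (hρ : ∀ x ∈ H, Commute ρ x) :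
    Commute (single ρ (1 : ℤ)) (charSum H χ) := by
  classical
  exact Commute.sum_right _ _ _ fun x hx =>
    single_commute_single (hρ x (mem_filter.1 hx).2) (Commute.one_left _)

lemma charSum_mul_charSum_eq_zero {t : G} (htH : t ∈ H) (htK : t ∈ K) (hχ : χ t = -1)
    (hψ : ψ t = 1) : charSum H χ * charSum K ψ = 0 := by
  have h : charSum H χ * charSum K ψ = -(charSum H χ * charSum K ψ) :=
    calc charSum H χ * charSum K ψ = charSum H χ * (single t 1 * charSum K ψ) := by
          rw [single_mul_charSum htK, hψ, Units.val_one, one_smul]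
      _ = (charSum H χ * single t 1) * charSum K ψ := (mul_assoc _ _ _).symm
      _ = -(charSum H χ * charSum K ψ) := by
          rw [charSum_mul_single htH, hχ, Units.val_neg, Units.val_one, neg_one_smul, neg_mul]
  exact coeff_eq_zero.1 (self_eq_neg.1 (by rw [← coeff_neg, ← h]))

open scoped Classical in
lemma coeff_charSum_mul_charSum (x : G) :
    (charSum H χ * charSum K ψ).coeff x =
      ∑ σ ∈ univ.filter (· ∈ H), ∑ τ ∈ univ.filter (· ∈ K),
        if σ * τ = x then (χ σ * ψ τ : ℤ) else 0 := by
  simp only [charSum, sum_mul_sum, single_mul_single, coeff_sum, Finsupp.finsetSum_apply,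
    coeff_single, Finsupp.single_apply]

lemma coeff_charSum_mul_charSum_eq_zero {x : G} (hx : ∀ σ ∈ H, ∀ τ ∈ K, σ * τ ≠ x) :
    (charSum H χ * charSum K ψ).coeff x = 0 := by
  classical
  rw [coeff_charSum_mul_charSum]
  refine sum_eq_zero fun σ hσ => sum_eq_zero fun τ hτ => if_neg ?_
  exact hx σ (mem_filter.1 hσ).2 τ (mem_filter.1 hτ).2

lemma coeff_charSum_mul_charSum_one (hHK : Disjoint H K) :
    (charSum H χ * charSum K ψ).coeff 1 = 1 := by
  classical
  rw [coeff_charSum_mul_charSum, sum_eq_single_of_mem 1 (by simp [H.one_mem]),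
    sum_eq_single_of_mem 1 (by simp [K.one_mem])]
  · simp
  · intro τ _ hτ
    rw [one_mul, if_neg hτ]
  · intro σ hσ hσ1
    refine sum_eq_zero fun τ hτ => if_neg fun hστ => hσ1 ?_
    have hτ' : τ = σ⁻¹ := eq_inv_of_mul_eq_one_right hστ
    exact Subgroup.disjoint_def.1 hHK (mem_filter.1 hσ).2
      (by simpa [hτ'] using (mem_filter.1 hτ).2)

end CharSum

section Hook

variable {α : Type*} {S : Finset α}

def colGroup (S : Finset α) : Subgroup (Perm α) := fixingSubgroup (Perm α) (S : Set α)ᶜ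

lemma mem_colGroup {σ : Perm α} : σ ∈ colGroup S ↔ ∀ x ∉ S, σ x = x := by
  simp [colGroup, mem_fixingSubgroup_iff, Perm.smul_def]

lemma apply_mem_iff_of_mem_colGroup {σ : Perm α} (hσ : σ ∈ colGroup S) {x : α} :
    σ x ∈ S ↔ x ∈ S := by
  by_cases hx : x ∈ S
  · refine iff_of_true (by_contra fun hσx => hσx ?_) hx
    rwa [σ.injective (mem_colGroup.1 hσ _ hσx)]
  · rw [mem_colGroup.1 hσ x hx]

lemma image_eq_of_mem_colGroup [DecidableEq α] {σ : Perm α} (hσ : σ ∈ colGroup S) :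
    S.image σ = S :=
  eq_of_subset_of_card_le (image_subset_iff.2 fun _ hx => (apply_mem_iff_of_mem_colGroup hσ).2 hx)
    (card_image_of_injective _ σ.injective).ge

variable [DecidableEq α] {p m : α}

lemma swap_mem_colGroup {x y : α} (hx : x ∈ S) (hy : y ∈ S) : swap x y ∈ colGroup S :=
  mem_colGroup.2 fun z hz => swap_apply_of_ne_of_ne (by rintro rfl; exact hz hx)
    (by rintro rfl; exact hz hy)

lemma exists_perm_image_eq {s t : Finset α} (h : s.card = t.card) :
    ∃ g : Perm α, s.image g = t := by
  obtain ⟨g, hg⟩ := (Set.powersetCard.isPretransitive (α := α) (n := t.card)).exists_smul_eq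
    ⟨s, h⟩ ⟨t, rfl⟩
  exact ⟨g, by simpa [Finset.smul_finset_def, Perm.smul_def] using congrArg Subtype.val hg⟩

def rowGroup (S : Finset α) (p : α) : Subgroup (Perm α) :=
  fixingSubgroup (Perm α) (S.erase p : Set α)

lemma mem_rowGroup {σ : Perm α} : σ ∈ rowGroup S p ↔ ∀ x ∈ S, x ≠ p → σ x = x := by
  simp only [rowGroup, mem_fixingSubgroup_iff, coe_erase, Set.mem_sdiff, Finset.mem_coe,
    Set.mem_singleton_iff, Perm.smul_def, and_imp]

lemma disjoint_colGroup_rowGroup : Disjoint (colGroup S) (rowGroup S p) := by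
  refine Subgroup.disjoint_def.2 fun {σ} hC hR => ?_
  have hfix : ∀ x ≠ p, σ x = x := fun x hxp => by
    by_cases hx : x ∈ S
    · exact mem_rowGroup.1 hR x hx hxp
    · exact mem_colGroup.1 hC x hx
  ext x
  by_cases hxp : x = p
  · subst hxp
    by_contra hσx
    exact hσx (σ.injective (hfix _ hσx))
  · exact hfix x hxp

lemma swap_mul_mem_colGroup_iff (hm : m ∉ S) {j : α} (hj : j ∈ insert m S) {x : Perm α} :
    swap j m * x ∈ colGroup S ↔ x ∈ colGroup (insert m S) ∧ x m = j := by
  simp only [mem_colGroup, Perm.mul_apply]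
  constructor
  · intro h
    have hxm : x m = j := by
      simpa using congrArg (swap j m) (h m hm)
    refine ⟨fun z hz => ?_, hxm⟩
    rw [mem_insert, not_or] at hz
    have hzj : z ≠ j := by rintro rfl; simp_all
    simpa [swap_apply_of_ne_of_ne hzj hz.1] using congrArg (swap j m) (h z hz.2)
  · rintro ⟨h, hxm⟩ z hz
    by_cases hzm : z = m
    · rw [hzm, hxm, swap_apply_left]
    · have hz' : z ∉ insert m S := by simp [hzm, hz]
      have hzj : z ≠ j := by rintro rfl; exact hz' hj
      rw [h z hz', swap_apply_of_ne_of_ne hzj hzm]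

variable [Fintype α]

noncomputable def hookElement (S : Finset α) (p : α) : MonoidAlgebra ℤ (Perm α) :=
  charSum (colGroup S) sign * charSum (rowGroup S p) 1

lemma single_mul_hookElement_of_mem_colGroup (g : Perm α) {σ : Perm α} (hσ : σ ∈ colGroup S) :
    single (g * σ) 1 * hookElement S p = (sign σ : ℤ) • (single g 1 * hookElement S p) := by
  rw [hookElement, ← single_one_mul_single_one, mul_assoc, ← mul_assoc (single σ 1),
    single_mul_charSum hσ, smul_mul_assoc, mul_smul_comm]

lemma single_mul_hookElement_of_fix (g : Perm α) {ρ : Perm α} (hρ : ∀ x ∈ S, ρ x = x) :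
    single (g * ρ) 1 * hookElement S p = single g 1 * hookElement S p := by
  have hcomm : ∀ σ ∈ colGroup S, Commute ρ σ := fun σ hσ =>
    Perm.Disjoint.commute fun x => by
      by_cases hx : x ∈ S
      · exact Or.inl (hρ x hx)
      · exact Or.inr (mem_colGroup.1 hσ x hx)
  have hrow : ρ ∈ rowGroup S p := mem_rowGroup.2 fun x hx _ => hρ x hx
  rw [hookElement, ← single_one_mul_single_one, mul_assoc, ← mul_assoc (single ρ 1),
    (commute_single_charSum hcomm).eq, mul_assoc, single_mul_charSum hrow, MonoidHom.one_apply,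
    Units.val_one, one_smul]

lemma exists_single_mul_hookElement_eq_smul {g g' : Perm α} (h : S.image g = S.image g') :
    ∃ ε : ℤˣ, single g' 1 * hookElement S p = (ε : ℤ) • (single g 1 * hookElement S p) := by
  set μ := g⁻¹ * g'
  have hμ : ∀ x, μ x ∈ S ↔ x ∈ S := fun x => by
    rw [← g.injective.mem_finset_image, h, show g (μ x) = g' x by simp [μ],
      g'.injective.mem_finset_image]
  set σ := ofSubtype (μ.subtypePerm hμ)
  have hσ : σ ∈ colGroup S := mem_colGroup.2 fun x hx => ofSubtype_subtypePerm_of_not_mem hμ hx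
  have hρ : ∀ x ∈ S, (σ⁻¹ * μ) x = x := fun x hx => by
    rw [Perm.mul_apply, Perm.inv_eq_iff_eq, ofSubtype_subtypePerm_of_mem hμ hx]
  refine ⟨sign σ, ?_⟩
  have hg' : g' = g * σ * (σ⁻¹ * μ) := by simp only [μ]; group
  rw [hg', single_mul_hookElement_of_fix _ hρ, single_mul_hookElement_of_mem_colGroup _ hσ]

lemma charSum_colGroup_insert (hm : m ∉ S) :
    charSum (colGroup (insert m S)) sign =
      ∑ j ∈ insert m S,
        (sign (swap j m) : ℤ) • (single (swap j m) 1 * charSum (colGroup S) sign) := by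
  classical
  have hmaps : ∀ x ∈ univ.filter (· ∈ colGroup (insert m S)), x m ∈ insert m S := fun x hx =>
    (apply_mem_iff_of_mem_colGroup (mem_filter.1 hx).2).2 (mem_insert_self m S)
  rw [charSum, ← sum_fiberwise_of_maps_to hmaps]
  refine sum_congr rfl fun j hj => ?_
  rw [charSum, mul_sum, smul_sum]
  symm
  refine sum_nbij' (swap j m * ·) (swap j m * ·) (fun y hy => ?_) (fun x hx => ?_)
    (fun y _ => swap_mul_self_mul j m y) (fun x _ => swap_mul_self_mul j m x) (fun y _ => ?_)
  · have hy' := (swap_mul_mem_colGroup_iff hm hj (x := swap j m * y)).1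
      (by simpa [swap_mul_self_mul] using (mem_filter.1 hy).2)
    simpa using hy'
  · simpa [swap_mul_mem_colGroup_iff hm hj] using hx
  · rw [single_mul_single, one_mul, smul_single, smul_eq_mul, Perm.sign_mul, Units.val_mul]

/-- The Garnir relation. -/
lemma hookElement_eq_sum_swap_mul (hp : p ∈ S) (hm : m ∉ S) :
    hookElement S p = ∑ j ∈ S, single (swap j m) 1 * hookElement S p := by
  have hpm : p ≠ m := fun h => hm (h ▸ hp)
  have hzero : charSum (colGroup (insert m S)) sign * charSum (rowGroup S p) 1 = 0 := by
    refine charSum_mul_charSum_eq_zero (t := swap p m)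
      (swap_mem_colGroup (mem_insert_of_mem hp) (mem_insert_self m S)) ?_ (sign_swap hpm) rfl
    refine mem_rowGroup.2 fun x hx hxp => swap_apply_of_ne_of_ne hxp ?_
    rintro rfl; exact hm hx
  have hsign : ∀ j ∈ S, (sign (swap j m) : ℤ) = -1 := fun j hj => by
    have hjm : j ≠ m := by rintro rfl; exact hm hj
    rw [sign_swap hjm, Units.val_neg, Units.val_one]
  rw [charSum_colGroup_insert hm, sum_insert hm, swap_self, ← Perm.one_def, Perm.sign_one,
    Units.val_one, one_smul, ← MonoidAlgebra.one_def, one_mul, sum_congr rfl fun j hj => by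
      rw [hsign j hj, neg_one_smul], sum_neg_distrib, ← sub_eq_add_neg, sub_mul, sub_eq_zero,
    sum_mul] at hzero
  simpa only [hookElement, mul_assoc] using hzero

lemma coeff_single_mul_hookElement_self (g : Perm α) :
    (single g 1 * hookElement S p).coeff g = 1 := by
  rw [coeff_single_mul_apply, inv_mul_cancel, one_mul, hookElement]
  exact coeff_charSum_mul_charSum_one disjoint_colGroup_rowGroup

lemma image_erase_subset_of_coeff_ne_zero {g g' : Perm α}
    (h : (single g 1 * hookElement S p).coeff g' ≠ 0) : (S.erase p).image g' ⊆ S.image g := by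
  rw [coeff_single_mul_apply, one_mul, hookElement] at h
  obtain ⟨σ, hσ, τ, hτ, hστ⟩ : ∃ σ ∈ colGroup S, ∃ τ ∈ rowGroup S p, σ * τ = g⁻¹ * g' := by
    by_contra! hne
    exact h (coeff_charSum_mul_charSum_eq_zero hne)
  intro y hy
  obtain ⟨x, hx, rfl⟩ := mem_image.1 hy
  obtain ⟨hxp, hxS⟩ := mem_erase.1 hx
  have hx' : g' x = g (σ x) := by
    rw [← mul_inv_cancel_left g g', ← hστ, Perm.mul_apply, Perm.mul_apply,
      mem_rowGroup.1 hτ x hxS hxp]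
  exact mem_image.2 ⟨σ x, (apply_mem_iff_of_mem_colGroup hσ).2 hxS, hx'.symm⟩

variable (S p) in
def hookIndex : Finset (Finset α) := powersetCard (S.card - 1) (univ.erase p)

lemma mem_hookIndex {s : Finset α} : s ∈ hookIndex S p ↔ p ∉ s ∧ s.card = S.card - 1 := by
  simp [hookIndex, mem_powersetCard, subset_erase]

lemma linearIndependent_single_mul_hookElement {rep : hookIndex S p → Perm α}
    (hfix : ∀ s, rep s p = p) (himage : ∀ s, S.image (rep s) = insert p (s : Finset α)) :
    LinearIndependent ℤ fun s => single (rep s) 1 * hookElement S p := by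
  have hcross : ∀ s s', (single (rep s) 1 * hookElement S p).coeff (rep s') ≠ 0 → s = s' := by
    intro s s' h
    have hs := mem_hookIndex.1 s.2
    have hs' := mem_hookIndex.1 s'.2
    have hsub := image_erase_subset_of_coeff_ne_zero h
    rw [image_erase (rep s').injective, himage, hfix, erase_insert hs'.1, himage] at hsub
    have hsub' : (s' : Finset α) ⊆ s := fun x hx =>
      (mem_insert.1 (hsub hx)).resolve_left fun hxp => hs'.1 (hxp ▸ hx)
    exact Subtype.ext (eq_of_subset_of_card_le hsub' (by rw [hs.2, hs'.2])).symm
  rw [Fintype.linearIndependent_iff]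
  intro c hc s'
  have hcoeff := congr(($hc).coeff (rep s'))
  rw [coeff_sum, Finsupp.finsetSum_apply, sum_eq_single s'] at hcoeff
  · rwa [coeff_smul_apply, coeff_single_mul_hookElement_self, smul_eq_mul, mul_one,
      coeff_zero, Finsupp.coe_zero, Pi.zero_apply] at hcoeff
  · intro s _ hs
    rw [coeff_smul_apply]
    by_contra h
    exact hs (hcross s s' (right_ne_zero_of_smul h))
  · simp

lemma single_mul_hookElement_mem_span_of_mem_image {rep : hookIndex S p → Perm α}
    (himage : ∀ s, S.image (rep s) = insert p (s : Finset α)) {g : Perm α} (hg : p ∈ S.image g) :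
    single g 1 * hookElement S p ∈
      Submodule.span ℤ (Set.range fun s => single (rep s) 1 * hookElement S p) := by
  have hs : (S.image g).erase p ∈ hookIndex S p := mem_hookIndex.2
    ⟨notMem_erase p _, by rw [card_erase_of_mem hg, card_image_of_injective _ g.injective]⟩
  obtain ⟨ε, hε⟩ := exists_single_mul_hookElement_eq_smul (p := p) (g := rep ⟨_, hs⟩)
    (g' := g) (by rw [himage, insert_erase hg])
  rw [hε]
  exact Submodule.smul_mem _ _ (Submodule.subset_span ⟨_, rfl⟩)

lemma span_single_mul_hookElement (hp : p ∈ S) {rep : hookIndex S p → Perm α}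
    (himage : ∀ s, S.image (rep s) = insert p (s : Finset α)) :
    Submodule.span ℤ (Set.range fun g : Perm α => single g 1 * hookElement S p) =
      Submodule.span ℤ (Set.range fun s => single (rep s) 1 * hookElement S p) := by
  refine le_antisymm (Submodule.span_le.2 (Set.range_subset_iff.2 fun g => ?_))
    (Submodule.span_mono (Set.range_subset_iff.2 fun s => ⟨rep s, rfl⟩))
  by_cases hg : p ∈ S.image g
  · exact single_mul_hookElement_mem_span_of_mem_image himage hg
  -- the Garnir relation moves `p` into the image
  have hm : g⁻¹ p ∉ S := fun h => hg (mem_image.2 ⟨_, h, by simp⟩)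
  have hsum : single g 1 * hookElement S p =
      ∑ j ∈ S, single (g * swap j (g⁻¹ p)) 1 * hookElement S p := by
    conv_lhs => rw [hookElement_eq_sum_swap_mul hp hm, mul_sum]
    simp only [← mul_assoc, single_one_mul_single_one]
  rw [SetLike.mem_coe, hsum]
  exact Submodule.sum_mem _ fun j hj =>
    single_mul_hookElement_mem_span_of_mem_image himage (mem_image.2 ⟨j, hj, by simp⟩)

lemma exists_perm_apply_eq_self_image_eq (hp : p ∈ S) {s : Finset α} (hs : s ∈ hookIndex S p) :
    ∃ g : Perm α, g p = p ∧ S.image g = insert p s := by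
  obtain ⟨hps, hcard⟩ := mem_hookIndex.1 hs
  obtain ⟨g, hg⟩ := exists_perm_image_eq (s := S) (t := insert p s) (by
    rw [card_insert_of_notMem hps, hcard, Nat.sub_add_cancel (card_pos.2 ⟨p, hp⟩)])
  -- correct `g` inside `S` so that it fixes `p`
  have hq : g⁻¹ p ∈ S := by
    rw [← g.injective.mem_finset_image, hg]
    simp
  refine ⟨g * swap p (g⁻¹ p), by simp, ?_⟩
  rw [← hg, coe_mul, ← image_image, image_eq_of_mem_colGroup (swap_mem_colGroup hp hq)]

lemma card_hookIndex : (hookIndex S p).card = (Fintype.card α - 1).choose (S.card - 1) := by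
  rw [hookIndex, card_powersetCard, card_erase_of_mem (mem_univ p), card_univ]

theorem nonempty_span_single_mul_hookElement_linearEquiv (hp : p ∈ S) :
    Nonempty (Submodule.span ℤ (Set.range fun g : Perm α => single g 1 * hookElement S p) ≃ₗ[ℤ]
      (Fin ((Fintype.card α - 1).choose (S.card - 1)) → ℤ)) := by
  choose rep hfix himage using fun s : hookIndex S p => exists_perm_apply_eq_self_image_eq hp s.2
  let b := (Module.Basis.span (linearIndependent_single_mul_hookElement hfix himage)).map
    (LinearEquiv.ofEq _ _ (span_single_mul_hookElement hp himage).symm)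
  have hcard : Fintype.card (hookIndex S p) = (Fintype.card α - 1).choose (S.card - 1) := by
    rw [Fintype.card_coe, card_hookIndex]
  exact ⟨(b.reindex (Fintype.equivFinOfCardEq hcard)).equivFun⟩

end Hook

lemma hookA_eq_charSum (n k : ℕ) :
    hookA n k = charSum (colGroup (univ.filter fun i : Fin n => (i : ℕ) < k)) sign := by
  classical
  rw [hookA, charSum]
  refine sum_congr (filter_congr fun σ _ => ?_) fun _ _ => rfl
  simp [mem_colGroup, not_lt]

lemma hookB_eq_charSum (n k : ℕ) (hn : 0 < n) :
    hookB n k = charSum (rowGroup (univ.filter fun i : Fin n => (i : ℕ) < k) ⟨0, hn⟩) 1 := by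
  classical
  rw [hookB, charSum]
  refine sum_congr (filter_congr fun σ _ => ?_) fun _ _ => rfl
  simp only [mem_rowGroup, mem_filter, mem_univ, true_and, ne_eq, Fin.ext_iff]
  exact forall_congr' fun i => ⟨fun h hi hi0 => h (by omega) hi, fun h hi1 hi => h hi (by omega)⟩

/-- The ℤ-submodule of `ℤ[Σₙ]` spanned by the elements `g·a·b`, `g ∈ Σₙ`, is a free
abelian group of rank `binom(n-1, k-1)`. -/
theorem hook_ideal_free_abelian (n k : ℕ) (hk : 2 ≤ k) (hn : k ≤ n) :
    Nonempty
      (↥(Submodule.span ℤ (Set.range fun g : Equiv.Perm (Fin n) =>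
          MonoidAlgebra.single g (1 : ℤ) * (hookA n k * hookB n k))) ≃ₗ[ℤ]
        (Fin (Nat.choose (n - 1) (k - 1)) → ℤ)) := by
  set S := univ.filter fun i : Fin n => (i : ℕ) < k
  have hn0 : 0 < n := by omega
  have hS : S.card = k := by rw [Fin.card_filter_val_lt, min_eq_right hn]
  have hp : (⟨0, hn0⟩ : Fin n) ∈ S := by simp only [S, mem_filter, mem_univ, true_and]; omega
  have := nonempty_span_single_mul_hookElement_linearEquiv hp
  rwa [hookElement, ← hookA_eq_charSum, ← hookB_eq_charSum, hS, Fintype.card_fin] at this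
end

section
/- Let n ≥ k ≥ 2 be integers. In the integral group ring ℤ[Σ_n], with a = Σ_σ sgn(σ)·σ summed over permutations fixing each of k+1, …, n, and b = Σ_τ τ summed over permutations fixing each of 2, …, k, the ℤ-submodule ℤ[Σ_n]·(b·a) spanned by the elements g·b·a for g ∈ Σ_n is a free abelian group of rank binom(n−1, k−1). -/
/-!
Write `b` for the symmetrizer of the group `B` of permutations fixing the leg `P = {1, …, k-1}`
pointwise and `a` for the antisymmetrizer of the group `A` of permutations supported on the column
`{0} ∪ P`. Up to sign, `g·b·a` depends only on the set `g(P)`: a permutation preserving `P` is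
`σ·h` with `h ∈ B` and `σ ∈ A` supported on `P`, and such a `σ` normalizes `B`. The elements with
`0 ∉ g(P)`, one for each `(k-1)`-subset of `{1, …, n-1}`, are linearly independent because `b·a`
has coefficient `1` at the identity and `0` at every permutation fixing `0` but moving `P`. If
`g(j) = 0` for some `j ∈ P`, a Garnir relation rewrites `g·b·a` through elements of the first kind.
-/

open Equiv Finset MonoidAlgebra MulAction

open scoped Pointwise

namespace Subgroup

variable {G : Type*} [Group G]

noncomputable def twistedSum (H : Subgroup G) [Finite H] (χ : G →* ℤˣ) : MonoidAlgebra ℤ G :=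
  haveI := Fintype.ofFinite H
  ∑ h : H, single (h : G) (χ h : ℤ)

variable {H K : Subgroup G} [Finite H] [Finite K] {χ ψ : G →* ℤˣ}

lemma coeff_twistedSum_of_mem {x : G} (hx : x ∈ H) : (H.twistedSum χ).coeff x = χ x := by
  classical
  rw [twistedSum, coeff_sum, Finsupp.finsetSum_apply,
    Finset.sum_eq_single ⟨x, hx⟩ (fun h _ hh => ?_) (fun h => by simp at h)]
  · simp [coeff_single]
  · simp [coeff_single, Subtype.ext_iff.not.mp hh]

lemma coeff_twistedSum_of_notMem {x : G} (hx : x ∉ H) : (H.twistedSum χ).coeff x = 0 := by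
  classical
  rw [twistedSum, coeff_sum, Finsupp.finsetSum_apply]
  refine Finset.sum_eq_zero fun h _ => ?_
  simp only [coeff_single, Finsupp.single_apply]
  exact if_neg fun e : (h : G) = x => hx (e ▸ h.2)

lemma single_mul_twistedSum {g : G} (hg : g ∈ H) :
    single g 1 * H.twistedSum χ = (χ g : ℤ) • H.twistedSum χ := by
  ext x
  rw [coeff_single_mul_apply, coeff_smul_apply, one_mul, smul_eq_mul]
  by_cases hx : x ∈ H
  · rw [coeff_twistedSum_of_mem (H.mul_mem (H.inv_mem hg) hx), coeff_twistedSum_of_mem hx,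
      map_mul, map_inv, Int.units_inv_eq_self, Units.val_mul]
  · rw [coeff_twistedSum_of_notMem ((H.mul_mem_cancel_left (H.inv_mem hg)).not.mpr hx),
      coeff_twistedSum_of_notMem hx, mul_zero]

lemma twistedSum_mul_single {g : G} (hg : g ∈ H) :
    H.twistedSum χ * single g 1 = (χ g : ℤ) • H.twistedSum χ := by
  ext x
  rw [coeff_mul_single_apply, coeff_smul_apply, mul_one, smul_eq_mul]
  by_cases hx : x ∈ H
  · rw [coeff_twistedSum_of_mem (H.mul_mem hx (H.inv_mem hg)), coeff_twistedSum_of_mem hx,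
      map_mul, map_inv, Int.units_inv_eq_self, Units.val_mul, mul_comm]
  · rw [coeff_twistedSum_of_notMem ((H.mul_mem_cancel_right (H.inv_mem hg)).not.mpr hx),
      coeff_twistedSum_of_notMem hx, mul_zero]

lemma commute_single_twistedSum {g : G} (hg : g ∈ normalizer (H : Set G)) :
    Commute (single g 1) (H.twistedSum χ) := by
  ext x
  rw [coeff_single_mul_apply, coeff_mul_single_apply, one_mul, mul_one]
  by_cases hx : x * g⁻¹ ∈ H
  · have hx' := (mem_set_normalizer_iff'.mp (inv_mem hg) x).mp hx
    rw [coeff_twistedSum_of_mem hx, coeff_twistedSum_of_mem hx', map_mul, map_mul, mul_comm]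
  · have hx' := (mem_set_normalizer_iff'.mp (inv_mem hg) x).not.mp hx
    rw [coeff_twistedSum_of_notMem hx, coeff_twistedSum_of_notMem hx']

lemma twistedSum_mul_twistedSum_eq_zero {s : G} (hK : s ∈ K) (hH : s ∈ H) (hs : ψ s ≠ χ s) :
    K.twistedSum ψ * H.twistedSum χ = 0 := by
  have key : (ψ s : ℤ) • (K.twistedSum ψ * H.twistedSum χ)
      = (χ s : ℤ) • (K.twistedSum ψ * H.twistedSum χ) := by
    rw [← smul_mul_assoc, ← twistedSum_mul_single hK, mul_assoc, single_mul_twistedSum hH,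
      mul_smul_comm]
  rw [← sub_eq_zero, ← sub_smul] at key
  exact (smul_eq_zero.mp key).resolve_left (sub_ne_zero.mpr (Units.val_injective.ne hs))

lemma coeff_twistedSum_mul_twistedSum_eq_zero {y : G} (hy : ∀ k ∈ K, k⁻¹ * y ∉ H) :
    (K.twistedSum ψ * H.twistedSum χ).coeff y = 0 := by
  rw [twistedSum, Finset.sum_mul, coeff_sum, Finsupp.finsetSum_apply]
  refine Finset.sum_eq_zero fun k _ => ?_
  rw [coeff_single_mul_apply, coeff_twistedSum_of_notMem (hy k k.2), mul_zero]

lemma coeff_twistedSum_mul_twistedSum_one (hKH : Disjoint K H) :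
    (K.twistedSum ψ * H.twistedSum χ).coeff 1 = 1 := by
  rw [twistedSum, Finset.sum_mul, coeff_sum, Finsupp.finsetSum_apply,
    Finset.sum_eq_single 1 (fun k _ hk => ?_) (fun h => by simp at h)]
  · simp [coeff_twistedSum_of_mem (one_mem H)]
  · rw [coeff_single_mul_apply, mul_one, coeff_twistedSum_of_notMem, mul_zero]
    intro hk'
    exact hk (Subtype.ext (disjoint_def.mp hKH k.2 (inv_mem_iff.mp hk')))

lemma twistedSum_eq_sum_filter [Fintype G] (p : G → Prop) [DecidablePred p]
    (hp : ∀ g, p g ↔ g ∈ H) :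
    H.twistedSum χ = ∑ g ∈ univ.filter p, single g (χ g : ℤ) := by
  rw [twistedSum, Finset.sum_subtype (p := (· ∈ H)) _ (by simpa using hp)]

end Subgroup

lemma MonoidAlgebra.linearIndependent_of_coeff {R G ι : Type*} [Ring R] (w : ι → MonoidAlgebra R G)
    (r : ι → G) (hself : ∀ i, (w i).coeff (r i) = 1) (hne : ∀ i j, i ≠ j → (w i).coeff (r j) = 0) :
    LinearIndependent R w := by
  classical
  refine linearIndependent_iff'.mpr fun s c hs i hi => ?_
  have hci := congrArg (fun x => x.coeff (r i)) hs
  simp only [coeff_sum, Finsupp.finsetSum_apply, coeff_smul_apply, smul_eq_mul, coeff_zero,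
    Finsupp.coe_zero, Pi.zero_apply] at hci
  rwa [Finset.sum_eq_single i (fun j _ hji => by rw [hne j i hji, mul_zero]) (fun h => (h hi).elim),
    hself, mul_one] at hci

section FixingSubgroup

variable {M β : Type*} [Group M] [MulAction M β]

lemma MulAction.stabilizer_le_normalizer_fixingSubgroup (s : Set β) :
    stabilizer M s ≤ Subgroup.normalizer (fixingSubgroup M s : Set M) := by
  intro g hg
  rw [mem_stabilizer_iff] at hg
  have hg' : g⁻¹ • s = s := by rw [inv_smul_eq_iff, hg]
  refine Subgroup.mem_normalizer_iff.mpr fun h => ⟨Set.conj_mem_fixingSubgroup hg, fun hh => ?_⟩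
  simpa [MulAut.conj_apply, mul_assoc] using Set.conj_mem_fixingSubgroup hg' hh

end FixingSubgroup

namespace Equiv.Perm

variable {α : Type*}

lemma mem_fixingSubgroup_iff {s : Set α} {σ : Perm α} :
    σ ∈ fixingSubgroup (Perm α) s ↔ ∀ x ∈ s, σ x = x := by
  simp [_root_.mem_fixingSubgroup_iff, Perm.smul_def]

lemma apply_mem_of_mem_fixingSubgroup_compl {s : Set α} {σ : Perm α}
    (hσ : σ ∈ fixingSubgroup (Perm α) sᶜ) {x : α} (hx : x ∈ s) : σ x ∈ s := by
  have hσs : σ ∈ stabilizer (Perm α) s := by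
    rw [← stabilizer_compl]; exact fixingSubgroup_le_stabilizer (Perm α) _ hσ
  rw [← mem_stabilizer_iff.mp hσs, ← Perm.smul_def]
  exact Set.smul_mem_smul_set hx

variable [DecidableEq α]

lemma smul_finset_eq_of_mem_fixingSubgroup {s : Finset α} {σ : Perm α}
    (hσ : σ ∈ fixingSubgroup (Perm α) (s : Set α)) : σ • s = s := by
  rw [← Finset.coe_inj, Finset.coe_smul_finset]
  exact fixingSubgroup_le_stabilizer (Perm α) _ hσ

lemma exists_mem_fixingSubgroup_compl_inv_mul_mem_fixingSubgroup {s : Finset α} {u : Perm α}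
    (hu : u • s = s) :
    ∃ σ ∈ fixingSubgroup (Perm α) (s : Set α)ᶜ, σ⁻¹ * u ∈ fixingSubgroup (Perm α) (s : Set α) := by
  have hus : ∀ x, u x ∈ s ↔ x ∈ s := fun x => by
    simpa only [hu, Perm.smul_def] using Finset.smul_mem_smul_finset_iff (s := s) (b := x) u
  refine ⟨ofSubtype (u.subtypePerm hus), mem_fixingSubgroup_iff.mpr fun x hx => ?_,
    mem_fixingSubgroup_iff.mpr fun x hx => ?_⟩
  · exact ofSubtype_apply_of_not_mem _ hx
  · rw [mul_apply, inv_eq_iff_eq, ofSubtype_apply_of_mem _ (Finset.mem_coe.mp hx)]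
    rfl

lemma exists_smul_finset_eq {s t : Finset α} (h : s.card = t.card) : ∃ g : Perm α, g • s = t := by
  have := Set.powersetCard.isPretransitive (α := α) (n := t.card)
  obtain ⟨g, hg⟩ := exists_smul_eq (Perm α) (⟨s, h⟩ : Set.powersetCard α t.card) ⟨t, rfl⟩
  exact ⟨g, congrArg Subtype.val hg⟩

lemma exists_apply_eq_self_smul_finset_eq {o : α} {s t : Finset α} (hos : o ∉ s) (hot : o ∉ t)
    (h : s.card = t.card) : ∃ g : Perm α, g o = o ∧ g • s = t := by
  obtain ⟨g, hg⟩ := exists_smul_finset_eq h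
  have hgo : g o ∉ t := by
    rwa [← hg, ← Perm.smul_def, Finset.smul_mem_smul_finset_iff]
  refine ⟨swap (g o) o * g, by simp, ?_⟩
  rw [mul_smul, hg]
  refine smul_finset_eq_of_mem_fixingSubgroup (mem_fixingSubgroup_iff.mpr fun x hx => ?_)
  exact swap_apply_of_ne_of_ne (ne_of_mem_of_not_mem hx hgo) (ne_of_mem_of_not_mem hx hot)

variable {o : α} {P : Finset α}

lemma smul_finset_eq_of_mul_apply_eq (hoP : o ∉ P) {τ σ : Perm α}
    (hτ : τ ∈ fixingSubgroup (Perm α) (P : Set α))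
    (hσ : σ ∈ fixingSubgroup (Perm α) (insert o (P : Set α))ᶜ) (h : (τ * σ) o = o) :
    (τ * σ) • P = P := by
  have hσo : σ o = o := by
    by_contra hne
    have hσoP : σ o ∈ P := (Set.mem_insert_iff.mp
      (apply_mem_of_mem_fixingSubgroup_compl hσ (Set.mem_insert o _))).resolve_left hne
    exact hne ((mem_fixingSubgroup_iff.mp hτ _ hσoP).symm.trans h)
  have hσP : σ • P = P := by
    refine Finset.eq_of_subset_of_card_le (fun _ hy => ?_) (Finset.card_smul_finset σ P).ge
    obtain ⟨x, hx, rfl⟩ := Finset.mem_smul_finset.mp hy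
    have hσx := apply_mem_of_mem_fixingSubgroup_compl hσ
      (Set.mem_insert_of_mem o (Finset.mem_coe.mpr hx))
    refine (Set.mem_insert_iff.mp hσx).resolve_left fun hxo => hoP ?_
    rw [← hσo] at hxo
    exact σ.injective hxo ▸ hx
  rw [mul_smul, hσP, smul_finset_eq_of_mem_fixingSubgroup hτ]

lemma disjoint_fixingSubgroup_fixingSubgroup_insert_compl (hoP : o ∉ P) :
    _root_.Disjoint (fixingSubgroup (Perm α) (P : Set α))
      (fixingSubgroup (Perm α) (insert o (P : Set α))ᶜ) := by
  refine Subgroup.disjoint_def.mpr fun {x} hB hA => ?_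
  have hxo : x o = o := by
    rcases apply_mem_of_mem_fixingSubgroup_compl hA (Set.mem_insert o (P : Set α)) with h | h
    · exact h
    · exact x.injective (mem_fixingSubgroup_iff.mp hB _ h)
  ext y
  by_cases hy : y ∈ insert o (P : Set α)
  · rcases hy with rfl | hy
    exacts [hxo, mem_fixingSubgroup_iff.mp hB y hy]
  · exact mem_fixingSubgroup_iff.mp hA y hy

variable [Fintype α]

/-- The element `b·a` of the hook with corner `o` and leg `P`. -/
noncomputable def hookElement (o : α) (P : Finset α) : MonoidAlgebra ℤ (Perm α) :=
  (fixingSubgroup (Perm α) (P : Set α)).twistedSum 1 *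
    (fixingSubgroup (Perm α) (insert o (P : Set α))ᶜ).twistedSum sign

lemma coeff_hookElement_one (hoP : o ∉ P) : (hookElement o P).coeff 1 = 1 :=
  Subgroup.coeff_twistedSum_mul_twistedSum_one
    (disjoint_fixingSubgroup_fixingSubgroup_insert_compl hoP)

lemma coeff_hookElement_eq_zero (hoP : o ∉ P) {y : Perm α} (hyo : y o = o) (hyP : y • P ≠ P) :
    (hookElement o P).coeff y = 0 := by
  refine Subgroup.coeff_twistedSum_mul_twistedSum_eq_zero fun τ hτ hσ => hyP ?_
  rw [← mul_inv_cancel_left τ y] at hyo ⊢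
  exact smul_finset_eq_of_mul_apply_eq hoP hτ hσ hyo

lemma single_mul_hookElement_eq_smul_of_smul_finset_eq {g g' : Perm α} (h : g • P = g' • P) :
    ∃ ε : ℤ, single g 1 * hookElement o P = ε • (single g' 1 * hookElement o P) := by
  obtain ⟨σ, hσ, hu⟩ := exists_mem_fixingSubgroup_compl_inv_mul_mem_fixingSubgroup
    (u := g'⁻¹ * g) (by rw [mul_smul, h, inv_smul_smul])
  have hσA : σ ∈ fixingSubgroup (Perm α) (insert o (P : Set α))ᶜ :=
    fixingSubgroup_antitone (Perm α) α (Set.compl_subset_compl.mpr (Set.subset_insert o _)) hσ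
  have hσN : σ ∈ Subgroup.normalizer (fixingSubgroup (Perm α) (P : Set α) : Set (Perm α)) := by
    refine stabilizer_le_normalizer_fixingSubgroup _ ?_
    rw [← stabilizer_compl]
    exact fixingSubgroup_le_stabilizer _ _ hσ
  have hg : (single g 1 : MonoidAlgebra ℤ (Perm α))
      = single g' 1 * single σ 1 * single (σ⁻¹ * (g'⁻¹ * g)) 1 := by
    simp [single_mul_single]
  refine ⟨sign σ, ?_⟩
  rw [hg, hookElement, mul_assoc, mul_assoc, ← mul_assoc (single (σ⁻¹ * _) 1),
    Subgroup.single_mul_twistedSum hu, MonoidHom.one_apply, Units.val_one, one_smul,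
    ← mul_assoc (single σ 1), (Subgroup.commute_single_twistedSum hσN).eq, mul_assoc,
    Subgroup.single_mul_twistedSum hσA, mul_smul_comm, mul_smul_comm]

lemma twistedSum_fixingSubgroup_erase {j : α} (hj : j ∈ P) :
    (fixingSubgroup (Perm α) (P.erase j : Set α)).twistedSum 1 = ∑ x ∈ (P.erase j)ᶜ,
      single (swap j x) 1 * (fixingSubgroup (Perm α) (P : Set α)).twistedSum 1 := by
  simp only [Subgroup.twistedSum, Finset.mul_sum, single_mul_single, MonoidHom.one_apply,
    Units.val_one, mul_one]
  rw [← Finset.sum_product']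
  refine Finset.sum_bij' (fun ρ _ => (ρ.1 j, ⟨swap j (ρ.1 j) * ρ, ?_⟩))
    (fun p hp => ⟨swap j p.1 * p.2, ?_⟩) (fun ρ _ => ?_) (fun _ _ => by simp)
    (fun ρ _ => ?_) (fun p hp => ?_) (fun ρ _ => ?_)
  · refine mem_fixingSubgroup_iff.mpr fun i hi => ?_
    rcases eq_or_ne i j with rfl | hij
    · exact swap_apply_right _ _
    · have hρi : ρ.1 i = i := mem_fixingSubgroup_iff.mp ρ.2 i (Finset.mem_erase.mpr ⟨hij, hi⟩)
      rw [mul_apply, hρi]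
      exact swap_apply_of_ne_of_ne hij fun h => hij (ρ.1.injective (hρi.trans h))
  · have hp1 : p.1 ∉ P.erase j := (Finset.mem_compl.mp (Finset.mem_product.mp hp).1)
    refine mem_fixingSubgroup_iff.mpr fun i hi => ?_
    have hi' := Finset.mem_coe.mp hi
    rw [mul_apply, mem_fixingSubgroup_iff.mp p.2.2 i (Finset.mem_of_mem_erase hi')]
    exact swap_apply_of_ne_of_ne (Finset.ne_of_mem_erase hi') (ne_of_mem_of_not_mem hi' hp1)
  · refine Finset.mem_product.mpr ⟨Finset.mem_compl.mpr fun h => ?_, by simp⟩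
    have hρj := mem_fixingSubgroup_iff.mp ρ.2 _ (Finset.mem_coe.mpr h)
    exact Finset.ne_of_mem_erase h (ρ.1.injective hρj)
  · exact Subtype.ext (swap_mul_self_mul _ _ _)
  · have hpj : (swap j p.1 * p.2) j = p.1 := by
      rw [mul_apply, mem_fixingSubgroup_iff.mp p.2.2 j hj, swap_apply_left]
    exact Prod.ext hpj (Subtype.ext (by simp only [hpj, swap_mul_self_mul]))
  · simp only [swap_mul_self_mul]

lemma twistedSum_fixingSubgroup_erase_mul_eq_zero (hoP : o ∉ P) {j : α} (hj : j ∈ P) :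
    (fixingSubgroup (Perm α) (P.erase j : Set α)).twistedSum 1 *
      (fixingSubgroup (Perm α) (insert o (P : Set α))ᶜ).twistedSum sign = 0 := by
  have hoj : o ≠ j := (ne_of_mem_of_not_mem hj hoP).symm
  refine Subgroup.twistedSum_mul_twistedSum_eq_zero (s := swap o j)
    (mem_fixingSubgroup_iff.mpr fun x hx => ?_) (mem_fixingSubgroup_iff.mpr fun x hx => ?_) ?_
  · have hx' := Finset.mem_erase.mp (Finset.mem_coe.mp hx)
    exact swap_apply_of_ne_of_ne (ne_of_mem_of_not_mem hx'.2 hoP) hx'.1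
  · simp only [Set.mem_compl_iff, Set.mem_insert_iff, not_or] at hx
    exact swap_apply_of_ne_of_ne hx.1 (ne_of_mem_of_not_mem (Finset.mem_coe.mpr hj) hx.2).symm
  · rw [sign_swap hoj, MonoidHom.one_apply]; decide

/-- The Garnir relation: `g·b'·a = 0` expanded over the cosets `swap j x · B`, where `b'`
symmetrizes over the pointwise stabilizer of `P.erase j`. Here `b'·a = 0` because that stabilizer
contains the odd permutation `swap o j ∈ A`. -/
lemma single_mul_hookElement_add_sum_eq_zero (hoP : o ∉ P) {j : α} (hj : j ∈ P) (g : Perm α) :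
    single g 1 * hookElement o P + ∑ x ∈ Pᶜ, single (g * swap j x) 1 * hookElement o P = 0 := by
  have h := congrArg (single g (1 : ℤ) * ·) (twistedSum_fixingSubgroup_erase_mul_eq_zero hoP hj)
  simp only [mul_zero, twistedSum_fixingSubgroup_erase hj, Finset.compl_erase,
    Finset.sum_insert (Finset.notMem_compl.mpr hj), swap_self, Finset.sum_mul, add_mul,
    mul_add, Finset.mul_sum] at h
  simpa [hookElement, ← mul_assoc, single_mul_single, ← one_def] using h

lemma single_mul_hookElement_mem_span (hoP : o ∉ P) (g : Perm α) :
    single g 1 * hookElement o P ∈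
      Submodule.span ℤ ((fun h => single h 1 * hookElement o P) '' {h | o ∉ h • P}) := by
  by_cases hg : o ∈ g • P
  · obtain ⟨j, hj, hgj⟩ := Finset.mem_smul_finset.mp hg
    rw [eq_neg_of_add_eq_zero_left (single_mul_hookElement_add_sum_eq_zero hoP hj g)]
    refine Submodule.neg_mem _ (Submodule.sum_mem _ fun x hx => Submodule.subset_span ⟨_, ?_, rfl⟩)
    rintro hx'
    obtain ⟨i, hi, hgi⟩ := Finset.mem_smul_finset.mp hx'
    rw [← hgj, mul_smul, smul_left_cancel_iff, Perm.smul_def, swap_apply_eq_iff,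
      swap_apply_left] at hgi
    exact Finset.mem_compl.mp hx (hgi ▸ hi)
  · exact Submodule.subset_span ⟨g, hg, rfl⟩

lemma linearIndependent_single_mul_hookElement (hoP : o ∉ P) {ι : Type*} {r : ι → Perm α}
    (hro : ∀ i, r i o = o) (hrP : Function.Injective fun i => r i • P) :
    LinearIndependent ℤ fun i => single (r i) (1 : ℤ) * hookElement o P := by
  refine MonoidAlgebra.linearIndependent_of_coeff _ r (fun i => ?_) (fun i i' hii' => ?_) <;>
    simp only [coeff_single_mul_apply, one_mul]
  · rw [inv_mul_cancel, coeff_hookElement_one hoP]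
  · refine coeff_hookElement_eq_zero hoP (by rw [mul_apply, hro, inv_eq_iff_eq, hro])
      fun h => hii' (hrP ?_)
    rw [mul_smul, inv_smul_eq_iff] at h
    exact h.symm

lemma span_range_single_mul_hookElement (hoP : o ∉ P) {ι : Type*} {r : ι → Perm α}
    (hr : ∀ g : Perm α, o ∉ g • P → ∃ i, r i • P = g • P) :
    Submodule.span ℤ (Set.range fun g : Perm α => single g (1 : ℤ) * hookElement o P) =
      Submodule.span ℤ (Set.range fun i => single (r i) (1 : ℤ) * hookElement o P) := by
  refine le_antisymm (Submodule.span_le.mpr ?_) (Submodule.span_mono ?_)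
  · rintro _ ⟨g, rfl⟩
    refine Submodule.span_le.mpr ?_ (single_mul_hookElement_mem_span hoP g)
    rintro _ ⟨h, hh, rfl⟩
    obtain ⟨i, hi⟩ := hr h hh
    obtain ⟨ε, hε⟩ := single_mul_hookElement_eq_smul_of_smul_finset_eq (o := o) hi.symm
    simp only [SetLike.mem_coe, hε]
    exact Submodule.smul_mem _ _ (Submodule.subset_span ⟨i, rfl⟩)
  · rintro _ ⟨i, rfl⟩
    exact ⟨r i, rfl⟩

theorem nonempty_span_single_mul_hookElement_linearEquiv (hoP : o ∉ P) :
    Nonempty (Submodule.span ℤ (Set.range fun g : Perm α => single g (1 : ℤ) * hookElement o P)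
      ≃ₗ[ℤ] (Fin ((Fintype.card α - 1).choose P.card) → ℤ)) := by
  let I := (univ.erase o).powersetCard P.card
  have hI : ∀ S ∈ I, o ∉ S ∧ P.card = S.card := fun S hS => by
    obtain ⟨hSo, hcard⟩ := mem_powersetCard.mp hS
    exact ⟨fun h => (mem_erase.mp (hSo h)).1 rfl, hcard.symm⟩
  choose r hro hrP using
    fun S : I => exists_apply_eq_self_smul_finset_eq hoP (hI S S.2).1 (hI S S.2).2
  have hli := linearIndependent_single_mul_hookElement hoP hro
    fun S S' h => Subtype.ext ((hrP S).symm.trans (h.trans (hrP S')))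
  have hspan := span_range_single_mul_hookElement hoP (r := r) fun g hg =>
    ⟨⟨g • P, mem_powersetCard.mpr ⟨fun y hy => mem_erase.mpr ⟨fun hyo => hg (hyo ▸ hy),
      mem_univ y⟩, card_smul_finset g P⟩⟩, hrP _⟩
  have hcard : Fintype.card I = (Fintype.card α - 1).choose P.card := by
    rw [Fintype.card_coe, card_powersetCard, card_erase_of_mem (mem_univ o), card_univ]
  exact ⟨(LinearEquiv.ofEq _ _ hspan).trans
    ((Module.Basis.span hli).reindex (Fintype.equivFinOfCardEq hcard)).equivFun⟩

end Equiv.Perm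

def hookLeg (n k : ℕ) : Finset (Fin n) :=
  univ.filter fun i => 1 ≤ (i : ℕ) ∧ (i : ℕ) < k

lemma card_hookLeg {n k : ℕ} (hn : k ≤ n) : (hookLeg n k).card = k - 1 := by
  have hmap : (hookLeg n k).map Fin.valEmbedding = Ico 1 k := by
    ext m
    simp only [hookLeg, mem_map, mem_filter, mem_univ, true_and, Fin.valEmbedding_apply, mem_Ico]
    exact ⟨fun ⟨a, ha, hm⟩ => hm ▸ ha, fun hm => ⟨⟨m, by omega⟩, hm, rfl⟩⟩
  rw [← card_map Fin.valEmbedding, hmap, Nat.card_Ico]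

lemma zero_notMem_hookLeg {n k : ℕ} [NeZero n] : (0 : Fin n) ∉ hookLeg n k := by
  simp [hookLeg]

lemma hookB_eq_twistedSum (n k : ℕ) :
    hookB n k = (fixingSubgroup (Perm (Fin n)) (hookLeg n k : Set (Fin n))).twistedSum 1 := by
  rw [Subgroup.twistedSum_eq_sum_filter
    (fun τ : Perm (Fin n) => ∀ i : Fin n, 1 ≤ (i : ℕ) → (i : ℕ) < k → τ i = i) fun τ => ?_]
  · rfl
  · simp [Perm.mem_fixingSubgroup_iff, hookLeg, and_imp]

lemma hookA_eq_twistedSum {n k : ℕ} [NeZero n] (hk : 1 ≤ k) :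
    hookA n k = (fixingSubgroup (Perm (Fin n)) (insert 0 (hookLeg n k : Set (Fin n)))ᶜ).twistedSum
      Perm.sign := by
  rw [Subgroup.twistedSum_eq_sum_filter
    (fun σ : Perm (Fin n) => ∀ i : Fin n, k ≤ (i : ℕ) → σ i = i) fun σ => ?_]
  · rfl
  · rw [Perm.mem_fixingSubgroup_iff]
    refine forall_congr' fun i => imp_congr_left ?_
    simp only [hookLeg, Set.mem_compl_iff, Set.mem_insert_iff, coe_filter, mem_univ, true_and,
      Set.mem_ofPred_eq, not_or, Fin.ext_iff, Fin.val_zero]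
    omega

/-- The ℤ-submodule of `ℤ[Σₙ]` spanned by the elements `g·b·a`, `g ∈ Σₙ`, is a free
abelian group of rank `binom(n-1, k-1)`. -/
theorem hook_ideal_dual_free_abelian (n k : ℕ) (hk : 2 ≤ k) (hn : k ≤ n) :
    Nonempty
      (↥(Submodule.span ℤ (Set.range fun g : Equiv.Perm (Fin n) =>
          MonoidAlgebra.single g (1 : ℤ) * (hookB n k * hookA n k))) ≃ₗ[ℤ]
        (Fin (Nat.choose (n - 1) (k - 1)) → ℤ)) := by
  have : NeZero n := ⟨by omega⟩
  have h := Equiv.Perm.nonempty_span_single_mul_hookElement_linearEquiv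
    (zero_notMem_hookLeg (n := n) (k := k))
  rwa [Fintype.card_fin, card_hookLeg hn, Equiv.Perm.hookElement, ← hookB_eq_twistedSum,
    ← hookA_eq_twistedSum (by omega)] at h
end
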